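/- arXiv:1702.01822 — 3 statements merged into one kernel-verified Lean document; each statement's English description precedes it below -/
import Mathlib

section
/- Let A, B be partitions of d with ν(A) + ν(B) = d − t for some t ≥ 1. Then there exist permutations α realizing A and β realizing B (on a set of d elements) such that ν(αβ) = d − t. -/
/-- The cycle structure of a permutation of `Fin d`: the multiset of lengths of the cycles
in its cyclic decomposition, including a part `1` for each fixed point. -/
def cycleStructure {d : ℕ} (σ : Equiv.Perm (Fin d)) : Multiset ℕ :=
  σ.cycleType + Multiset.replicate (d - σ.cycleType.sum) 1

/-- A permutation realizes a partition `D` of `d` if its cycle structure equals `D`. -/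
def Realizes {d : ℕ} (σ : Equiv.Perm (Fin d)) (D : Nat.Partition d) : Prop :=
  cycleStructure σ = D.parts

/-- The defect of a partition: the sum of (part − 1) over its parts. -/
def defect {d : ℕ} (D : Nat.Partition d) : ℕ :=
  (D.parts.map (· - 1)).sum

/-- The defect of a permutation: the sum of (part − 1) over its cycle structure,
i.e. `d` minus the number of its cycles (fixed points counted as 1-cycles). -/
def permDefect {d : ℕ} (σ : Equiv.Perm (Fin d)) : ℕ :=
  ((cycleStructure σ).map (· - 1)).sum

/-!
Write `ν` for the defect and consider only parts `≥ 2` (the cycle types). Since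
`ν(A) + ν(B) < d` and a multiset of parts `≥ 2` has sum at most twice its defect, the parts
of one of `A`, `B`, say `B`, sum to at most `d - 1`. Fix a point `x`, lower a part `a` of `A` to
`a - 1` (drop it if `a = 2`) and realize the smaller pair by `α, β` on the other `d - 1`
points, by induction. Multiplying `α` on the left by the transposition `(x y)`, with `y` in a
cycle of length `a - 1` of `α` (a fixed point `y ≠ x` if `a = 2`), splices `x` into that
cycle and restores the part `a`. As `x` is a fixed point of `αβ`, the same transposition also
merges two cycles of `αβ`, so the defect of the product rises by one as well.
-/

open Equiv Equiv.Perm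

def partsDefect (M : Multiset ℕ) : ℕ :=
  (M.map (· - 1)).sum

@[simp]
lemma partsDefect_zero : partsDefect 0 = 0 := rfl

@[simp]
lemma partsDefect_cons (a : ℕ) (M : Multiset ℕ) :
    partsDefect (a ::ₘ M) = (a - 1) + partsDefect M := by
  simp [partsDefect]

@[simp]
lemma partsDefect_add (M N : Multiset ℕ) :
    partsDefect (M + N) = partsDefect M + partsDefect N := by
  simp [partsDefect]

@[simp]
lemma partsDefect_replicate_one (n : ℕ) : partsDefect (Multiset.replicate n 1) = 0 := by
  simp [partsDefect]

lemma sum_le_two_mul_partsDefect {M : Multiset ℕ} (hM : ∀ a ∈ M, 2 ≤ a) :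
    M.sum ≤ 2 * partsDefect M := by
  induction M using Multiset.induction with
  | empty => simp
  | cons a M ih =>
    simp only [Multiset.mem_cons, forall_eq_or_imp] at hM
    simp only [Multiset.sum_cons, partsDefect_cons]
    have := ih hM.2
    omega

section Splice

variable {X : Type*} [DecidableEq X] {π : Perm X} {x y : X}

lemma disjoint_swap_of_apply_eq_self (hx : π x = x) (hy : π y = y) : Disjoint (swap x y) π := by
  intro z
  by_cases hz : z = x ∨ z = y
  · right
    rcases hz with rfl | rfl <;> assumption
  · left
    push Not at hz
    exact swap_apply_of_ne_of_ne hz.1 hz.2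

lemma ofSubtype_ne_apply_self (σ : Perm {z // z ≠ x}) : ofSubtype σ x = x :=
  ofSubtype_apply_of_not_mem σ (not_not.2 rfl)

variable [Fintype X]

theorem cycleType_swap_mul_of_apply_eq_self (hx : π x = x) (hy : π y = y) (hxy : x ≠ y) :
    (swap x y * π).cycleType = 2 ::ₘ π.cycleType := by
  rw [(disjoint_swap_of_apply_eq_self hx hy).cycleType_mul, (isCycle_swap hxy).cycleType,
    card_support_swap hxy, Multiset.singleton_add]

lemma cycleType_eq_card_support_cycleOf_cons (hy : π y ≠ y) :
    π.cycleType = (π.cycleOf y).support.card ::ₘ (π * (π.cycleOf y)⁻¹).cycleType := by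
  have hc := cycleOf_mem_cycleFactorsFinset_iff.2 (mem_support.2 hy)
  conv_lhs => rw [← inv_mul_cancel_right π (π.cycleOf y)]
  rw [(disjoint_mul_inv_of_mem_cycleFactorsFinset hc).cycleType_mul,
    (isCycle_cycleOf π hy).cycleType, add_comm, Multiset.singleton_add]

theorem cycleType_swap_mul_of_apply_ne (hx : π x = x) (hy : π y ≠ y) :
    (swap x y * π).cycleType =
      ((π.cycleOf y).support.card + 1) ::ₘ (π * (π.cycleOf y)⁻¹).cycleType := by
  set c := π.cycleOf y
  have hρc : Disjoint (π * c⁻¹) c := disjoint_mul_inv_of_mem_cycleFactorsFinset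
    (cycleOf_mem_cycleFactorsFinset_iff.2 (mem_support.2 hy))
  obtain ⟨l, hl⟩ : ∃ l, toList π y = y :: l := by
    obtain ⟨n, hn⟩ : ∃ n, c.support.card = n + 1 :=
      Nat.exists_eq_add_one.2 (by simpa [c] using hy)
    exact ⟨_, by rw [toList, hn]; rfl⟩
  have hnd : (x :: toList π y).Nodup := by
    refine List.nodup_cons.2 ⟨fun h => hy ?_, nodup_toList π y⟩
    rwa [← (mem_toList_iff.1 h).1.symm.eq_of_left hx]
  have hlen : 2 ≤ (x :: toList π y).length := by simp [hl]
  -- `x` is spliced into the cycle of `y`, just before `y`.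
  have hsplice : swap x y * c = List.formPerm (x :: toList π y) := by
    rw [hl, List.formPerm_cons_cons, ← hl, formPerm_toList]
  have hcyc : (swap x y * c).IsCycle := hsplice ▸ List.isCycle_formPerm hnd hlen
  have hcard : (swap x y * c).support.card = c.support.card + 1 := by
    rw [hsplice, List.support_formPerm_of_nodup _ hnd (fun z h => by simp [h] at hlen),
      List.toFinset_card_of_nodup hnd, List.length_cons, length_toList]
  have hcx : c x = x := by
    rw [cycleOf_apply]
    split_ifs <;> simp [hx]
  have hρ : Disjoint (swap x y * c) (π * c⁻¹) := by
    refine Disjoint.mul_left ?_ hρc.symm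
    refine disjoint_swap_of_apply_eq_self ?_ ((hρc y).resolve_right (by rwa [cycleOf_apply_self]))
    rw [mul_apply, Perm.inv_eq_iff_eq.2 hcx.symm, hx]
  calc (swap x y * π).cycleType = (swap x y * c * (π * c⁻¹)).cycleType := by
        rw [mul_assoc, ← hρc.commute.eq, inv_mul_cancel_right]
    _ = _ := by rw [hρ.cycleType_mul, hcyc.cycleType, hcard, Multiset.singleton_add]

theorem partsDefect_cycleType_swap_mul (hx : π x = x) (hxy : x ≠ y) :
    partsDefect (swap x y * π).cycleType = partsDefect π.cycleType + 1 := by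
  by_cases hy : π y = y
  · rw [cycleType_swap_mul_of_apply_eq_self hx hy hxy, partsDefect_cons]
    omega
  · have hk : 2 ≤ (π.cycleOf y).support.card := two_le_card_support_cycleOf_iff.2 hy
    rw [cycleType_swap_mul_of_apply_ne hx hy, cycleType_eq_card_support_cycleOf_cons hy,
      partsDefect_cons, partsDefect_cons]
    omega

lemma exists_ne_cycleType_swap_mul_eq_two_cons (hx : π x = x)
    (hcard : π.support.card + 2 ≤ Fintype.card X) :
    ∃ y ≠ x, (swap x y * π).cycleType = 2 ::ₘ π.cycleType := by
  obtain ⟨y, -, hy⟩ := Finset.exists_mem_notMem_of_card_lt_card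
    (s := insert x π.support) (t := Finset.univ)
    (by rw [Finset.card_univ]; have := Finset.card_insert_le x π.support; omega)
  rw [Finset.mem_insert, not_or, notMem_support] at hy
  exact ⟨y, hy.1, cycleType_swap_mul_of_apply_eq_self hx hy.2 (Ne.symm hy.1)⟩

lemma exists_ne_cycleType_swap_mul_eq_succ_cons {m : ℕ} {M : Multiset ℕ} (hx : π x = x)
    (h : π.cycleType = m ::ₘ M) :
    ∃ y ≠ x, (swap x y * π).cycleType = (m + 1) ::ₘ M := by
  have hm : m ∈ π.cycleType := h ▸ Multiset.mem_cons_self m M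
  rw [cycleType_def, Multiset.mem_map] at hm
  obtain ⟨c, hc, rfl⟩ := hm
  obtain ⟨y, hyc⟩ := (mem_cycleFactorsFinset_iff.1 hc).1.nonempty_support
  have hcy : c = π.cycleOf y := cycle_is_cycleOf hyc hc
  have hy : π y ≠ y := by rw [← cycleOf_apply_self, ← hcy]; exact mem_support.1 hyc
  refine ⟨y, fun hyx => hy (hyx ▸ hx), ?_⟩
  rw [cycleType_swap_mul_of_apply_ne hx hy, ← hcy]
  rw [cycleType_eq_card_support_cycleOf_cons hy, ← hcy] at h
  rw [(Multiset.cons_inj_right _).1 h]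
  rfl

end Splice

def HasDefectAdditiveProduct (X : Type*) [Fintype X] [DecidableEq X] (A B : Multiset ℕ) : Prop :=
  ∃ α β : Perm X, α.cycleType = A ∧ β.cycleType = B ∧
    partsDefect (α * β).cycleType = partsDefect A + partsDefect B

namespace HasDefectAdditiveProduct

variable {X : Type*} [Fintype X] [DecidableEq X] {A B : Multiset ℕ}

lemma symm (h : HasDefectAdditiveProduct X A B) : HasDefectAdditiveProduct X B A := by
  obtain ⟨α, β, hα, hβ, hαβ⟩ := h
  have hconj : (β * α).cycleType = (α * β).cycleType := by
    simpa [mul_assoc] using cycleType_conj (σ := α * β) (τ := α⁻¹)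
  exact ⟨β, α, hβ, hα, by rw [hconj, hαβ, add_comm]⟩

lemma partsDefect_cycleType_swap_mul_ofSubtype_mul {x y : X} (hxy : x ≠ y)
    (α β : Perm {z // z ≠ x}) :
    partsDefect (swap x y * ofSubtype α * ofSubtype β).cycleType =
      partsDefect (α * β).cycleType + 1 := by
  rw [mul_assoc, ← map_mul, partsDefect_cycleType_swap_mul (ofSubtype_ne_apply_self _) hxy,
    cycleType_ofSubtype]

lemma two_cons_of_subtype (x : X) (hsum : 2 + A.sum ≤ Fintype.card X)
    (h : HasDefectAdditiveProduct {z // z ≠ x} A B) :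
    HasDefectAdditiveProduct X (2 ::ₘ A) B := by
  obtain ⟨α, β, hα, hβ, hαβ⟩ := h
  have hcard : (ofSubtype α).support.card + 2 ≤ Fintype.card X := by
    rw [← sum_cycleType, cycleType_ofSubtype, hα]
    omega
  obtain ⟨y, hyx, hy⟩ := exists_ne_cycleType_swap_mul_eq_two_cons (ofSubtype_ne_apply_self α) hcard
  refine ⟨swap x y * ofSubtype α, ofSubtype β, by rw [hy, cycleType_ofSubtype, hα],
    by rw [cycleType_ofSubtype, hβ], ?_⟩
  rw [partsDefect_cycleType_swap_mul_ofSubtype_mul hyx.symm, hαβ, partsDefect_cons]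
  omega

lemma succ_cons_of_subtype (x : X) {m : ℕ}
    (h : HasDefectAdditiveProduct {z // z ≠ x} (m ::ₘ A) B) :
    HasDefectAdditiveProduct X ((m + 1) ::ₘ A) B := by
  obtain ⟨α, β, hα, hβ, hαβ⟩ := h
  have hm : 2 ≤ m := two_le_of_mem_cycleType (hα ▸ Multiset.mem_cons_self m A)
  obtain ⟨y, hyx, hy⟩ := exists_ne_cycleType_swap_mul_eq_succ_cons (ofSubtype_ne_apply_self α)
    (by rw [cycleType_ofSubtype, hα])
  refine ⟨swap x y * ofSubtype α, ofSubtype β, hy, by rw [cycleType_ofSubtype, hβ], ?_⟩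
  rw [partsDefect_cycleType_swap_mul_ofSubtype_mul hyx.symm, hαβ, partsDefect_cons,
    partsDefect_cons]
  omega

end HasDefectAdditiveProduct

theorem hasDefectAdditiveProduct_of_partsDefect_add_lt_card (X : Type*) [Fintype X]
    [DecidableEq X] {A B : Multiset ℕ} (hA : ∀ a ∈ A, 2 ≤ a) (hB : ∀ b ∈ B, 2 ≤ b)
    (hAX : A.sum ≤ Fintype.card X) (hBX : B.sum ≤ Fintype.card X)
    (hAB : partsDefect A + partsDefect B < Fintype.card X) :
    HasDefectAdditiveProduct X A B := by
  induction hn : Fintype.card X generalizing X A B with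
  | zero => omega
  | succ n ih =>
    rw [hn] at hAX hBX hAB
    by_cases h0 : A = 0 ∧ B = 0
    · obtain ⟨rfl, rfl⟩ := h0
      exact ⟨1, 1, cycleType_one, cycleType_one, by simp⟩
    obtain ⟨x⟩ : Nonempty X := Fintype.card_pos_iff.1 (by omega)
    have hcard : Fintype.card {z // z ≠ x} = n := by simp [hn]
    -- Lower a part `a` of `A` to `a - 1` (remove it if `a = 2`) and recurse on `{z // z ≠ x}`.
    have lower : ∀ {A B : Multiset ℕ}, (∀ a ∈ A, 2 ≤ a) → (∀ b ∈ B, 2 ≤ b) → A.sum ≤ n + 1 →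
        B.sum ≤ n → partsDefect A + partsDefect B < n + 1 → A ≠ 0 →
        HasDefectAdditiveProduct X A B := by
      intro A B hA hB hAn hBn hAB hA0
      obtain ⟨a, ha⟩ := Multiset.exists_mem_of_ne_zero hA0
      obtain ⟨A, rfl⟩ := Multiset.exists_cons_of_mem ha
      simp only [Multiset.mem_cons, forall_eq_or_imp, Multiset.sum_cons, partsDefect_cons]
        at hA hAn hAB
      obtain ⟨m, rfl⟩ : ∃ m, a = m + 1 := ⟨a - 1, by omega⟩
      rcases eq_or_lt_of_le (show 1 ≤ m by omega) with rfl | hm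
      · exact .two_cons_of_subtype x (by omega)
          (ih _ hA.2 hB (by omega) (by omega) (by omega) hcard)
      · refine .succ_cons_of_subtype x (ih _ ?_ hB ?_ (by omega) ?_ hcard)
        · simpa only [Multiset.mem_cons, forall_eq_or_imp] using ⟨hm, hA.2⟩
        · rw [Multiset.sum_cons]; omega
        · rw [partsDefect_cons]; omega
    have hAsum := sum_le_two_mul_partsDefect hA
    have hBsum := sum_le_two_mul_partsDefect hB
    by_cases hBn : B.sum ≤ n
    · by_cases hA0 : A = 0
      · exact (lower hB hA (by omega) (by simp [hA0]) (by omega) (fun hB0 => h0 ⟨hA0, hB0⟩)).symm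
      · exact lower hA hB hAX hBn hAB hA0
    · have hAn : A.sum ≤ n := by omega
      have hB0 : B ≠ 0 := by rintro rfl; simp at hBn
      exact (lower hB hA hBX hAn (by omega) hB0).symm

namespace Nat.Partition

variable {d : ℕ} (D : d.Partition)

lemma parts_eq_filter_two_le_add_replicate :
    D.parts = D.parts.filter (2 ≤ ·) + Multiset.replicate (D.parts.filter (¬ 2 ≤ ·)).card 1 := by
  conv_lhs => rw [← Multiset.filter_add_not (2 ≤ ·) D.parts]
  congr 1
  refine Multiset.eq_replicate_card.2 fun a ha => ?_
  have := D.parts_pos (Multiset.mem_of_mem_filter ha)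
  have := (Multiset.mem_filter.1 ha).2
  omega

lemma sum_filter_two_le_add_card_filter_not :
    (D.parts.filter (2 ≤ ·)).sum + (D.parts.filter (¬ 2 ≤ ·)).card = d := by
  have h := congrArg Multiset.sum D.parts_eq_filter_two_le_add_replicate
  rwa [D.parts_sum, Multiset.sum_add, Multiset.sum_replicate, smul_eq_mul, mul_one, eq_comm] at h

lemma defect_eq_partsDefect_filter : defect D = partsDefect (D.parts.filter (2 ≤ ·)) := by
  change partsDefect D.parts = _
  conv_lhs => rw [D.parts_eq_filter_two_le_add_replicate]
  rw [partsDefect_add, partsDefect_replicate_one, add_zero]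

end Nat.Partition

lemma permDefect_eq_partsDefect_cycleType {d : ℕ} (σ : Perm (Fin d)) :
    permDefect σ = partsDefect σ.cycleType := by
  change partsDefect (cycleStructure σ) = _
  rw [cycleStructure, partsDefect_add, partsDefect_replicate_one, add_zero]

lemma realizes_of_cycleType_eq_filter {d : ℕ} {σ : Perm (Fin d)} {D : d.Partition}
    (h : σ.cycleType = D.parts.filter (2 ≤ ·)) : Realizes σ D := by
  have := D.sum_filter_two_le_add_card_filter_not
  rw [Realizes, cycleStructure, h, show d - (D.parts.filter (2 ≤ ·)).sum =
    (D.parts.filter (¬ 2 ≤ ·)).card by omega]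
  exact D.parts_eq_filter_two_le_add_replicate.symm

theorem stmt_1 (d t : ℕ) (ht : 1 ≤ t) (A B : Nat.Partition d)
    (hAB : defect A + defect B = d - t) :
    ∃ α β : Equiv.Perm (Fin d), Realizes α A ∧ Realizes β B ∧
      permDefect (α * β) = d - t := by
  rcases Nat.eq_zero_or_pos d with rfl | hd
  · refine ⟨1, 1, realizes_of_cycleType_eq_filter ?_, realizes_of_cycleType_eq_filter ?_, ?_⟩ <;>
      simp [permDefect_eq_partsDefect_cycleType]
  have := A.sum_filter_two_le_add_card_filter_not
  have := B.sum_filter_two_le_add_card_filter_not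
  have hcard := Fintype.card_fin d
  rw [A.defect_eq_partsDefect_filter, B.defect_eq_partsDefect_filter] at hAB
  obtain ⟨α, β, hα, hβ, hαβ⟩ := hasDefectAdditiveProduct_of_partsDefect_add_lt_card (Fin d)
    (A := A.parts.filter (2 ≤ ·)) (B := B.parts.filter (2 ≤ ·))
    (fun _ ha => (Multiset.mem_filter.1 ha).2) (fun _ hb => (Multiset.mem_filter.1 hb).2)
    (by omega) (by omega) (by omega)
  refine ⟨α, β, realizes_of_cycleType_eq_filter hα, realizes_of_cycleType_eq_filter hβ, ?_⟩
  rw [permDefect_eq_partsDefect_cycleType, hαβ, hAB]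
end

section
/- Let l and d be integers with 1 < l ≤ d such that gcd(l, d) = 1 and l is greater than every divisor of d other than 1 and d. Then every transitive permutation subgroup G of the symmetric group on d elements that contains an l-cycle is primitive. -/
/-!
Let `B` be a nontrivial proper block. Its size `b` divides `d`, so `b < l`. Translate `B` to
meet the support of the `l`-cycle `σ`. Then either `σ` fixes the translate, which then contains
the whole support and so has at least `l` points, or it moves the translate off itself. In the
second case the translate lies inside the support and is a block of `⟨σ⟩`, which acts
transitively on the support, so `b ∣ l`. Together with `b ∣ d` this gives `b = 1`.
-/

/-- A subgroup of `Equiv.Perm (Fin d)` is transitive if its natural action on `Fin d`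
is transitive. -/
def IsTransitiveSubgroup {d : ℕ} (G : Subgroup (Equiv.Perm (Fin d))) : Prop :=
  ∀ x y : Fin d, ∃ g ∈ G, g x = y

/-- A subgroup of `Equiv.Perm (Fin d)` is primitive if it is transitive and every block
of its natural action on `Fin d` is trivial. -/
def IsPrimitiveSubgroup {d : ℕ} (G : Subgroup (Equiv.Perm (Fin d))) : Prop :=
  IsTransitiveSubgroup G ∧
    ∀ B : Set (Fin d), MulAction.IsBlock G B → MulAction.IsTrivialBlock B

open Pointwise MulAction Equiv Subgroup

theorem MulAction.IsBlock.of_le {M α : Type*} [Group M] [MulAction M α] {H K : Subgroup M}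
    (hHK : H ≤ K) {B : Set α} (hB : IsBlock K B) : IsBlock H B :=
  fun g₁ g₂ h ↦ hB (g₁ := ⟨g₁, hHK g₁.2⟩) (g₂ := ⟨g₂, hHK g₂.2⟩) h

namespace Equiv.Perm

variable {α : Type*} [Fintype α] [DecidableEq α] {σ : Perm α} {B : Set α}

theorem IsCycle.orbit_zpowers_eq_support (hσ : σ.IsCycle) {x : α} (hx : x ∈ σ.support) :
    orbit (zpowers σ) x = σ.support := by
  ext y
  constructor
  · rintro ⟨⟨_, k, rfl⟩, rfl⟩
    exact zpow_apply_mem_support.2 hx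
  · intro hy
    obtain ⟨k, hk⟩ := hσ.exists_zpow_eq (mem_support.1 hx) (mem_support.1 hy)
    exact ⟨⟨σ ^ k, k, rfl⟩, hk⟩

theorem IsCycle.support_subset_of_smul_eq (hσ : σ.IsCycle) (hB : σ • B = B) {x : α}
    (hxB : x ∈ B) (hx : x ∈ σ.support) : (σ.support : Set α) ⊆ B := by
  have hstab : zpowers σ ≤ stabilizer (Perm α) B := zpowers_le.2 hB
  rw [← hσ.orbit_zpowers_eq_support hx]
  rintro _ ⟨h, rfl⟩
  rw [← hstab h.2]
  exact Set.smul_mem_smul_set hxB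

theorem subset_support_of_disjoint_smul (hB : _root_.Disjoint (σ • B) B) : B ⊆ σ.support := by
  intro x hx
  by_contra hfix
  rw [Finset.mem_coe, notMem_support] at hfix
  exact Set.disjoint_left.1 hB ⟨x, hx, hfix⟩ hx

theorem IsCycle.ncard_dvd_card_support_of_isBlock (hσ : σ.IsCycle) (hB : IsBlock (zpowers σ) B)
    (hBσ : B ⊆ σ.support) (hne : B.Nonempty) : B.ncard ∣ σ.support.card := by
  obtain ⟨x, hx⟩ := hne
  have horbit := hσ.orbit_zpowers_eq_support (hBσ hx)
  let ι : orbit (zpowers σ) x →[zpowers σ] α := ⟨Subtype.val, fun _ _ ↦ rfl⟩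
  have hcard : (ι ⁻¹' B).ncard = B.ncard :=
    Set.ncard_preimage_of_injective_subset_range Subtype.val_injective
      fun y hy ↦ ⟨⟨y, horbit ▸ hBσ hy⟩, rfl⟩
  have := (hB.preimage ι).ncard_dvd_card ⟨⟨x, mem_orbit_self x⟩, hx⟩
  rwa [hcard, horbit, Nat.card_coe_set_eq, Set.ncard_coe_finset] at this

end Equiv.Perm

theorem MulAction.IsBlock.subsingleton_of_isCycle_mem {α : Type*} [Fintype α] [DecidableEq α]
    {G : Subgroup (Perm α)} [IsPretransitive G α] {σ : Perm α} (hσ : σ.IsCycle) (hσG : σ ∈ G)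
    (hcop : σ.support.card.Coprime (Fintype.card α)) {B : Set α} (hB : IsBlock G B)
    (hlt : B.ncard < σ.support.card) : B.Subsingleton := by
  rcases B.eq_empty_or_nonempty with rfl | ⟨b, hb⟩
  · exact Set.subsingleton_empty
  obtain ⟨x, hx⟩ := hσ.nonempty_support
  obtain ⟨g, hgb⟩ := exists_smul_eq G b x
  have hxB : x ∈ g • B := hgb ▸ Set.smul_mem_smul_set hb
  have hcard : (g • B).ncard = B.ncard := Set.ncard_smul_set g B
  have hBσ : IsBlock (zpowers σ) (g • B) := (hB.translate g).of_le (zpowers_le.2 hσG)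
  rcases hBσ.smul_eq_or_disjoint ⟨σ, mem_zpowers σ⟩ with hfix | hdisj
  · have := Set.ncard_le_ncard (hσ.support_subset_of_smul_eq hfix hxB hx)
    rw [Set.ncard_coe_finset, hcard] at this
    omega
  · have hdvd := hσ.ncard_dvd_card_support_of_isBlock hBσ
      (Perm.subset_support_of_disjoint_smul hdisj) ⟨x, hxB⟩
    rw [hcard] at hdvd
    have hB₁ : B.ncard = 1 :=
      (hcop.coprime_dvd_left hdvd).eq_one_of_dvd (by simpa using hB.ncard_dvd_card ⟨b, hb⟩)
    exact Set.ncard_le_one_iff_subsingleton.1 hB₁.le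

theorem stmt_4_general (l d : ℕ)
    (hcop : Nat.gcd l d = 1)
    (hdiv : ∀ e : ℕ, e ∣ d → e ≠ 1 → e ≠ d → e < l)
    (G : Subgroup (Equiv.Perm (Fin d)))
    (htrans : IsTransitiveSubgroup G)
    (hcycle : ∃ σ ∈ G, σ.IsCycle ∧ σ.support.card = l) :
    IsPrimitiveSubgroup G := by
  have : IsPretransitive G (Fin d) :=
    ⟨fun x y ↦ let ⟨g, hg, hgx⟩ := htrans x y; ⟨⟨g, hg⟩, hgx⟩⟩
  obtain ⟨σ, hσG, hσ, rfl⟩ := hcycle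
  refine ⟨htrans, fun B hB ↦ or_iff_not_imp_right.2 fun hB_univ ↦ ?_⟩
  by_contra hB_nontriv
  rw [Set.not_subsingleton_iff] at hB_nontriv
  have hdvd : B.ncard ∣ d := by simpa using hB.ncard_dvd_card hB_nontriv.nonempty
  have hne_one : B.ncard ≠ 1 := (Set.one_lt_ncard_iff_nontrivial.2 hB_nontriv).ne'
  have hne_d : B.ncard ≠ d := fun h ↦
    hB_univ (Set.eq_of_subset_of_ncard_le (Set.subset_univ B) (by simp [h]))
  exact hB_nontriv.not_subsingleton (hB.subsingleton_of_isCycle_mem hσ hσG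
    (by simpa using hcop) (hdiv _ hdvd hne_one hne_d))

theorem stmt_4 (l d : ℕ) (hl : 1 < l) (hld : l ≤ d)
    (hcop : Nat.gcd l d = 1)
    (hdiv : ∀ e : ℕ, e ∣ d → e ≠ 1 → e ≠ d → e < l)
    (G : Subgroup (Equiv.Perm (Fin d)))
    (htrans : IsTransitiveSubgroup G)
    (hcycle : ∃ σ ∈ G, σ.IsCycle ∧ σ.support.card = l) :
    IsPrimitiveSubgroup G :=
  stmt_4_general l d hcop hdiv G htrans hcycle
end

section
/- Let n ≥ 2 and let σ be an even permutation of a set Ω of n elements. Then σ can be written as a product σ = γδ of two n-cycles γ and δ (i.e. two cycles of length n on Ω). -/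
/-!
Induct on the finite set `s` on which the two cycles are to live. If the even permutation
`σ ≠ 1` fixes a point `x` of `s`, factor it on `s \ {x}` as `γ * δ`; then
`σ = (γ * swap x e) * (swap x e * δ)` and both factors are cycles on `s`. If `σ` is a cycle on
all of `s`, evenness forces `#s` odd and `σ` is the square of the cycle `σ ^ ((#s + 1) / 2)`.
Otherwise pick `p`, `q` in different cycles of `σ`: then `σ * swap p (σ⁻¹ p) * swap q (σ⁻¹ q)`
is even and fixes `p` and `q`, and a factorisation `γ * δ` of it on `s \ {p, q}` extends to `σ`
by moving the two transpositions past `δ` and inserting `p`, `q` into both cycles.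
-/

open Equiv Finset

namespace Equiv.Perm

variable {α : Type*} [DecidableEq α] [Fintype α]

theorem toList_eq_cons {f : Perm α} {x : α} (hx : x ∈ f.support) :
    ∃ t, f.toList x = x :: t := by
  rcases h : f.toList x with _ | ⟨y, t⟩
  · exact absurd h (toList_eq_nil_iff.not.2 (not_not.2 hx))
  · have := toList_getElem_zero f x hx
    simp only [h, List.getElem_cons_zero] at this
    exact ⟨t, by rw [this]⟩

/-- In list form this is `swap x e * formPerm (e :: t) = formPerm (x :: e :: t)`. -/
theorem IsCycle.swap_mul_of_notMem {f : Perm α} (hf : f.IsCycle) {x e : α}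
    (hx : x ∉ f.support) (he : e ∈ f.support) :
    (swap x e * f).IsCycle ∧ (swap x e * f).support = insert x f.support := by
  obtain ⟨t, ht⟩ := toList_eq_cons he
  have hnd : (e :: t).Nodup := ht ▸ nodup_toList f e
  have hform : List.formPerm (e :: t) = f := by
    rw [← ht, formPerm_toList, hf.cycleOf_eq (mem_support.1 he)]
  have hsupp : f.support = (e :: t).toFinset := by
    rw [← hform, List.support_formPerm_of_nodup _ hnd (fun y => ht ▸ toList_ne_singleton f e y)]
  have hnd' : (x :: e :: t).Nodup := List.nodup_cons.2 ⟨by simpa [hsupp] using hx, hnd⟩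
  rw [← hform, ← List.formPerm_cons_cons]
  refine ⟨List.isCycle_formPerm hnd' (by simp), ?_⟩
  rw [List.support_formPerm_of_nodup _ hnd' (by simp), hform, hsupp, List.toFinset_cons]

theorem IsCycle.mul_swap_of_notMem {f : Perm α} (hf : f.IsCycle) {x e : α}
    (hx : x ∉ f.support) (he : e ∈ f.support) :
    (f * swap x e).IsCycle ∧ (f * swap x e).support = insert x f.support := by
  have h := hf.inv.swap_mul_of_notMem (x := x) (e := e) (by rwa [support_inv])
    (by rwa [support_inv])
  rw [← inv_inv (f * swap x e), mul_inv_rev, swap_inv, isCycle_inv, support_inv]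
  rwa [support_inv] at h

theorem exists_isCycle_support_eq {s : Finset α} (hs : 2 ≤ #s) :
    ∃ f : Perm α, f.IsCycle ∧ f.support = s := by
  refine ⟨s.toList.formPerm, List.isCycle_formPerm s.nodup_toList (by simpa), ?_⟩
  rw [List.support_formPerm_of_nodup _ s.nodup_toList, toList_toFinset]
  intro x hx
  have := congr_arg List.length hx
  simp only [Finset.length_toList, List.length_singleton] at this
  omega

theorem three_le_card_support_of_sign_eq_one {σ : Perm α} (h1 : σ ≠ 1) (hσ : sign σ = 1) :
    3 ≤ #σ.support := by
  have h0 : #σ.support ≠ 0 := by rwa [Ne, card_eq_zero, support_eq_empty_iff]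
  have h2 : #σ.support ≠ 2 := fun h => by
    rw [(card_support_eq_two.1 h).sign_eq] at hσ
    exact absurd hσ (by decide)
  have := σ.card_support_ne_one
  omega

theorem IsCycle.exists_mul_self_eq_of_odd {σ : Perm α} (hσ : σ.IsCycle)
    (hodd : Odd #σ.support) :
    ∃ γ : Perm α, γ.IsCycle ∧ γ.support = σ.support ∧ γ * γ = σ := by
  obtain ⟨m, hm⟩ := hodd
  have hcop : Nat.Coprime (m + 1) (orderOf σ) := by
    rw [hσ.orderOf, hm, show 2 * m + 1 = (m + 1) + m by ring, Nat.coprime_self_add_right]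
    simp
  refine ⟨σ ^ (m + 1), hσ.pow_iff.2 hcop, support_pow_coprime hcop, ?_⟩
  rw [← pow_add, show m + 1 + (m + 1) = (2 * m + 1) + 1 by ring, pow_succ, ← hm,
    ← hσ.orderOf, pow_orderOf_eq_one, one_mul]

theorem exists_not_sameCycle {σ : Perm α} (h1 : σ ≠ 1) (hσ : ¬σ.IsCycle) :
    ∃ p ∈ σ.support, ∃ q ∈ σ.support, ¬σ.SameCycle p q := by
  obtain ⟨p, hp⟩ := nonempty_of_ne_empty (support_eq_empty_iff.not.2 h1)
  by_contra! h
  exact hσ ⟨p, mem_support.1 hp, fun q hq => h p hp q (mem_support.2 hq)⟩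

def IsProdTwoCyclesOn (σ : Perm α) (s : Finset α) : Prop :=
  ∃ γ δ : Perm α, γ.IsCycle ∧ γ.support = s ∧ δ.IsCycle ∧ δ.support = s ∧ σ = γ * δ

theorem isProdTwoCyclesOn_one {s : Finset α} (hs : 2 ≤ #s) :
    (1 : Perm α).IsProdTwoCyclesOn s := by
  obtain ⟨γ, hγ, hγs⟩ := exists_isCycle_support_eq hs
  exact ⟨γ, γ⁻¹, hγ, hγs, hγ.inv, by rw [support_inv, hγs], (mul_inv_cancel γ).symm⟩

theorem IsCycle.isProdTwoCyclesOn {σ : Perm α} (hσ : σ.IsCycle) (hsign : Perm.sign σ = 1) :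
    σ.IsProdTwoCyclesOn σ.support := by
  have hodd : Odd #σ.support := by
    rcases Nat.even_or_odd #σ.support with heven | hodd
    · rw [hσ.sign, heven.neg_one_pow] at hsign
      exact absurd hsign (by decide)
    · exact hodd
  obtain ⟨γ, hγ, hγs, hγγ⟩ := hσ.exists_mul_self_eq_of_odd hodd
  exact ⟨γ, γ, hγ, hγs, hγ, hγs, hγγ.symm⟩

namespace IsProdTwoCyclesOn

variable {σ : Perm α} {s : Finset α}

theorem insert_of_notMem (h : σ.IsProdTwoCyclesOn s) {x : α} (hx : x ∉ s) :
    σ.IsProdTwoCyclesOn (insert x s) := by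
  obtain ⟨γ, δ, hγ, hγs, hδ, hδs, rfl⟩ := h
  obtain ⟨e, he⟩ := hγs ▸ hγ.nonempty_support
  obtain ⟨hγ', hγs'⟩ := hγ.mul_swap_of_notMem (x := x) (hγs ▸ hx) (hγs ▸ he)
  obtain ⟨hδ', hδs'⟩ := hδ.swap_mul_of_notMem (x := x) (hδs ▸ hx) (hδs ▸ he)
  refine ⟨γ * swap x e, swap x e * δ, hγ', by rw [hγs', hγs], hδ', by rw [hδs', hδs], ?_⟩
  rw [mul_assoc, ← mul_assoc (swap x e), swap_mul_self, one_mul]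

theorem insert_insert_mul_swap_mul_swap (h : σ.IsProdTwoCyclesOn s) {p q b d : α}
    (hp : p ∉ s) (hq : q ∉ s) (hpq : p ≠ q) (hb : b ∈ s) (hd : d ∈ s) :
    (σ * swap q d * swap p b).IsProdTwoCyclesOn (insert p (insert q s)) := by
  obtain ⟨γ, δ, hγ, rfl, hδ, hδs, rfl⟩ := h
  have hδp : δ p = p := notMem_support.1 (hδs ▸ hp)
  have hδq : δ q = q := notMem_support.1 (hδs ▸ hq)
  have hb' : δ b ∈ γ.support := hδs ▸ apply_mem_support.2 (hδs ▸ hb)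
  have hd' : δ d ∈ γ.support := hδs ▸ apply_mem_support.2 (hδs ▸ hd)
  obtain ⟨hγ₁, hγs₁⟩ := hγ.mul_swap_of_notMem hq hd'
  obtain ⟨hγ₂, hγs₂⟩ := hγ₁.mul_swap_of_notMem (x := p) (e := q)
    (by simp [hγs₁, hpq, hp]) (by simp [hγs₁])
  obtain ⟨hδ₁, hδs₁⟩ := hδ.swap_mul_of_notMem (hδs ▸ hp) (hδs ▸ hb')
  obtain ⟨hδ₂, hδs₂⟩ := hδ₁.swap_mul_of_notMem (x := q) (e := p)
    (by simp [hδs₁, hδs, hpq.symm, hq]) (by simp [hδs₁])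
  refine ⟨γ * swap q (δ d) * swap p q, swap q p * (swap p (δ b) * δ), hγ₂,
    by rw [hγs₂, hγs₁], hδ₂, by rw [hδs₂, hδs₁, hδs, insert_comm], ?_⟩
  have hconj : δ * swap q d * swap p b = swap q (δ d) * (swap p (δ b) * δ) := by
    rw [mul_swap_eq_swap_mul δ q, hδq, mul_assoc, mul_swap_eq_swap_mul δ p, hδp]
  rw [swap_comm q p]
  simp only [mul_assoc, swap_mul_self_mul] at hconj ⊢
  rw [hconj]

end IsProdTwoCyclesOn

theorem support_mul_swap_mul_swap_subset {σ : Perm α} {p q b d : α} (hb : σ b = p)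
    (hd : σ d = q) (hpq : p ≠ q) (hpd : p ≠ d) :
    (σ * swap p b * swap q d).support ⊆ (σ.support.erase p).erase q := by
  intro y hy
  simp only [mem_erase, mem_support, Perm.mul_apply, swap_apply_def] at hy ⊢
  split_ifs at hy <;> grind

theorem inv_apply_mem_erase_erase {σ : Perm α} {p q : α} (hp : p ∈ σ.support)
    (hpq : ¬σ.SameCycle p q) : σ⁻¹ p ∈ (σ.support.erase p).erase q := by
  refine mem_erase.2 ⟨fun h => hpq ?_, mem_erase.2 ⟨fun h => mem_support.1 hp ?_, ?_⟩⟩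
  · exact h ▸ sameCycle_symm_apply_right.2 (SameCycle.refl σ p)
  · exact (inv_eq_iff_eq.1 h).symm
  · rwa [← support_inv, apply_mem_support, support_inv]

theorem isProdTwoCyclesOn_support_of_not_isCycle {σ : Perm α} (h1 : σ ≠ 1)
    (hcyc : ¬σ.IsCycle) (hsign : sign σ = 1)
    (ih : ∀ t ⊂ σ.support, 2 ≤ #t → ∀ {τ : Perm α}, τ.support ⊆ t → sign τ = 1 →
      τ.IsProdTwoCyclesOn t) :
    σ.IsProdTwoCyclesOn σ.support := by
  obtain ⟨p, hp, q, hq, hpq⟩ := exists_not_sameCycle h1 hcyc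
  set b := σ⁻¹ p
  set d := σ⁻¹ q
  have hpq' : p ≠ q := fun h => hpq (h ▸ SameCycle.refl σ p)
  have hb : b ∈ (σ.support.erase p).erase q := inv_apply_mem_erase_erase hp hpq
  have hd : d ∈ (σ.support.erase p).erase q := by
    rw [erase_right_comm]; exact inv_apply_mem_erase_erase hq fun h => hpq h.symm
  have hσ' : (σ * swap p b * swap q d).IsProdTwoCyclesOn ((σ.support.erase p).erase q) :=
    ih _ ((erase_subset q _).trans_ssubset (erase_ssubset hp))
      (one_lt_card.2 ⟨b, hb, d, hd, fun h => hpq' (σ⁻¹.injective h)⟩)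
      (support_mul_swap_mul_swap_subset (σ.apply_symm_apply p) (σ.apply_symm_apply q) hpq'
        (ne_of_mem_erase (mem_of_mem_erase hd)).symm)
      (by rw [map_mul, map_mul, hsign, sign_swap (ne_of_mem_erase (mem_of_mem_erase hb)).symm,
        sign_swap (ne_of_mem_erase hd).symm]; decide)
  have := hσ'.insert_insert_mul_swap_mul_swap (by simp) (notMem_erase q _) hpq' hb hd
  rwa [insert_erase (mem_erase.2 ⟨hpq'.symm, hq⟩), insert_erase hp, mul_swap_mul_self,
    mul_swap_mul_self] at this

theorem isProdTwoCyclesOn_of_sign_eq_one {s : Finset α} (hs : 2 ≤ #s) {σ : Perm α}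
    (hσs : σ.support ⊆ s) (hsign : sign σ = 1) : σ.IsProdTwoCyclesOn s := by
  induction s using Finset.strongInduction generalizing σ with
  | H s ih =>
  by_cases h1 : σ = 1
  · exact h1 ▸ isProdTwoCyclesOn_one hs
  by_cases hfix : ∃ x ∈ s, x ∉ σ.support
  · obtain ⟨x, hxs, hx⟩ := hfix
    have hσx : σ.support ⊆ s.erase x := fun y hy =>
      mem_erase.2 ⟨ne_of_mem_of_not_mem hy hx, hσs hy⟩
    have h3 := (three_le_card_support_of_sign_eq_one h1 hsign).trans (card_le_card hσx)
    have := (ih _ (erase_ssubset hxs) (by omega) hσx hsign).insert_of_notMem (notMem_erase x s)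
    rwa [insert_erase hxs] at this
  obtain rfl : σ.support = s := hσs.antisymm fun x hx => by_contra fun h => hfix ⟨x, hx, h⟩
  by_cases hcyc : σ.IsCycle
  · exact hcyc.isProdTwoCyclesOn hsign
  · exact isProdTwoCyclesOn_support_of_not_isCycle h1 hcyc hsign ih

end Equiv.Perm

theorem stmt_15 {Ω : Type*} [Fintype Ω] [DecidableEq Ω] (n : ℕ) (hn : 2 ≤ n)
    (hcard : Fintype.card Ω = n)
    (σ : Equiv.Perm Ω) (heven : Equiv.Perm.sign σ = 1) :
    ∃ γ δ : Equiv.Perm Ω, γ.IsCycle ∧ γ.support.card = n ∧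
      δ.IsCycle ∧ δ.support.card = n ∧ σ = γ * δ := by
  have hs : 2 ≤ #(univ : Finset Ω) := by rwa [card_univ, hcard]
  obtain ⟨γ, δ, hγ, hγs, hδ, hδs, hσ⟩ :=
    Perm.isProdTwoCyclesOn_of_sign_eq_one hs (subset_univ σ.support) heven
  exact ⟨γ, δ, hγ, by rw [hγs, card_univ, hcard], hδ, by rw [hδs, card_univ, hcard], hσ⟩
end
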